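/- arXiv:2103.10024 — 5 statements merged into one kernel-verified Lean document; each statement's English description precedes it below -/
import Mathlib

section
/- Let n ≥ 1 and let E be a symmetric edge set on vertices {1,…,n} with no self-loops, with relative rotations R_ij ∈ SO(3) for (i,j) ∈ E satisfying R_ji = R_ijᵀ. Let R̃ be the associated 3n×3n block measurement matrix. Let R*_1,…,R*_n ∈ SO(3) and define the 3n×3n block-diagonal matrix Λ with 3×3 diagonal blocks Λ_i = Σ_{j : (i,j)∈E} R_ij (R*_j)ᵀ R*_i. If Λ − R̃ is positive semidefinite, then (R*_1,…,R*_n) is a global minimizer of the rotation averaging objective: for all R_1,…,R_n ∈ SO(3), Σ_{(i,j)∈E} ‖R_i R_ij − R_j‖_F² ≥ Σ_{(i,j)∈E} ‖R*_i R_ij − R*_j‖_F². -/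
/-!
For orthogonal `Q_i`, expanding the square gives `‖Q_i R_ij - Q_j‖² = 6 - 2 tr (Q_i R_ij Q_jᵀ)`, so
the objective is `6 |E| - 2 tr (Xᵀ R̃ X)`, where `X` is the `3n × 3` matrix whose `i`-th block row
is `Q_iᵀ`. Because `Λ` is block diagonal and every `Q_i` is orthogonal, `tr (Xᵀ Λ X) = ∑ tr Λ_i`
does not depend on `X`, and it equals `tr (X*ᵀ R̃ X*)` for the candidate `X*`. Positive
semidefiniteness of `Λ - R̃` therefore gives `tr (Xᵀ R̃ X) ≤ tr (Xᵀ Λ X) = tr (X*ᵀ R̃ X*)`.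
-/

open Matrix BigOperators

/-- `SO(3)`: real 3×3 matrices with `RᵀR = I` and `det R = 1`. -/
def SO3 (R : Matrix (Fin 3) (Fin 3) ℝ) : Prop :=
  Rᵀ * R = 1 ∧ R.det = 1

/-- Squared Frobenius norm of a 3×3 real matrix. -/
noncomputable def frobSq (A : Matrix (Fin 3) (Fin 3) ℝ) : ℝ :=
  Matrix.trace (Aᵀ * A)

theorem Finset.sum_sum_ite_mem {ι κ M : Type*} [Fintype ι] [Fintype κ] [DecidableEq ι]
    [DecidableEq κ] [AddCommMonoid M] (E : Finset (ι × κ)) (f : ι → κ → M) :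
    ∑ i, ∑ j, (if (i, j) ∈ E then f i j else 0) = ∑ e ∈ E, f e.1 e.2 := by
  rw [← Finset.sum_product', Finset.univ_product_univ]
  simp only [Prod.mk.eta]
  rw [Finset.sum_ite_mem, Finset.univ_inter]

namespace Matrix

variable {ι m k α : Type*} [Fintype ι] [Fintype m]

def stackTranspose (Q : ι → Matrix k m α) : Matrix (ι × m) k α :=
  of fun p c => Q p.1 c p.2

theorem stackTranspose_transpose_mul_mul [CommSemiring α] (Q : ι → Matrix k m α)
    (M : Matrix (ι × m) (ι × m) α) :
    (stackTranspose Q)ᵀ * M * stackTranspose Q =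
      ∑ i, ∑ j, Q i * M.submatrix (Prod.mk i) (Prod.mk j) * (Q j)ᵀ := by
  ext c d
  simp only [mul_apply, sum_apply, transpose_apply, submatrix_apply, stackTranspose, of_apply,
    Fintype.sum_prod_type, Finset.sum_mul]
  exact (Finset.sum_congr rfl fun _ _ => Finset.sum_comm).trans Finset.sum_comm

theorem trace_transpose_mul_mul_nonneg [Fintype k] [CommSemiring α] [PartialOrder α]
    [IsOrderedRing α] (M : Matrix m m α) (hM : ∀ x, 0 ≤ x ⬝ᵥ (M *ᵥ x)) (X : Matrix m k α) :
    0 ≤ trace (Xᵀ * M * X) := by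
  have hcols : trace (Xᵀ * M * X) = ∑ c, (fun p => X p c) ⬝ᵥ (M *ᵥ fun p => X p c) := by
    simp only [trace, diag, mul_apply, transpose_apply, dotProduct, mulVec, Finset.sum_mul,
      Finset.mul_sum, mul_assoc]
    exact Finset.sum_congr rfl fun _ _ => Finset.sum_comm
  exact hcols ▸ Finset.sum_nonneg fun c _ => hM _

variable [DecidableEq ι] [CommSemiring α]

theorem trace_stackTranspose_quadForm_of_blockDiagonal [DecidableEq m] (Q : ι → Matrix m m α)
    (hQ : ∀ i, (Q i)ᵀ * Q i = 1) (M : Matrix (ι × m) (ι × m) α) (L : ι → Matrix m m α)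
    (hM : ∀ i j a b, M (i, a) (j, b) = if i = j then L i a b else 0) :
    trace ((stackTranspose Q)ᵀ * M * stackTranspose Q) = ∑ i, trace (L i) := by
  have hblock : ∀ i j, M.submatrix (Prod.mk i) (Prod.mk j) = if i = j then L i else 0 := by
    intro i j; ext a b; split_ifs <;> simp_all
  simp only [stackTranspose_transpose_mul_mul, hblock, trace_sum]
  refine Finset.sum_congr rfl fun i _ => ?_
  rw [Finset.sum_eq_single_of_mem i (Finset.mem_univ i) fun j _ hj => by simp [Ne.symm hj],
    if_pos rfl, trace_mul_comm, ← Matrix.mul_assoc, hQ, Matrix.one_mul]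

theorem trace_stackTranspose_quadForm_of_blockSupport (Q : ι → Matrix m m α)
    (M : Matrix (ι × m) (ι × m) α) (E : Finset (ι × ι)) (B : ι → ι → Matrix m m α)
    (hM : ∀ i j a b, M (i, a) (j, b) = if (i, j) ∈ E then B i j a b else 0) :
    trace ((stackTranspose Q)ᵀ * M * stackTranspose Q) =
      ∑ e ∈ E, trace (Q e.1 * B e.1 e.2 * (Q e.2)ᵀ) := by
  have hblock : ∀ i j, trace (Q i * M.submatrix (Prod.mk i) (Prod.mk j) * (Q j)ᵀ) =
      if (i, j) ∈ E then trace (Q i * B i j * (Q j)ᵀ) else 0 := by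
    intro i j
    split_ifs with h
    · congr 3; ext a b; simp [hM, h]
    · rw [show M.submatrix (Prod.mk i) (Prod.mk j) = 0 by ext a b; simp [hM, h]]
      simp
  simp only [stackTranspose_transpose_mul_mul, trace_sum, hblock]
  exact Finset.sum_sum_ite_mem E _

end Matrix

theorem frobSq_sub_of_orthogonal {P C : Matrix (Fin 3) (Fin 3) ℝ} (hP : Pᵀ * P = 1)
    (hC : Cᵀ * C = 1) : frobSq (P - C) = 6 - 2 * trace (P * Cᵀ) := by
  have hPC : trace (Pᵀ * C) = trace (P * Cᵀ) := by
    rw [← trace_transpose, transpose_mul, transpose_transpose, trace_mul_comm]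
  have hCP : trace (Cᵀ * P) = trace (P * Cᵀ) := trace_mul_comm _ _
  rw [frobSq, transpose_sub, sub_mul, mul_sub, mul_sub, hP, hC]
  simp only [trace_sub, trace_one, Fintype.card_fin, hPC, hCP]
  push_cast
  ring

theorem sum_frobSq_residual {ι : Type*} (E : Finset (ι × ι))
    (Rij : ι → ι → Matrix (Fin 3) (Fin 3) ℝ)
    (hRij : ∀ e ∈ E, (Rij e.1 e.2)ᵀ * Rij e.1 e.2 = 1) (Q : ι → Matrix (Fin 3) (Fin 3) ℝ)
    (hQ : ∀ i, (Q i)ᵀ * Q i = 1) :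
    ∑ e ∈ E, frobSq (Q e.1 * Rij e.1 e.2 - Q e.2) =
      6 * E.card - 2 * ∑ e ∈ E, trace (Q e.1 * Rij e.1 e.2 * (Q e.2)ᵀ) := by
  have hprod : ∀ e ∈ E, (Q e.1 * Rij e.1 e.2)ᵀ * (Q e.1 * Rij e.1 e.2) = 1 := fun e he => by
    rw [transpose_mul, Matrix.mul_assoc, ← Matrix.mul_assoc (Q e.1)ᵀ, hQ, Matrix.one_mul,
      hRij e he]
  rw [Finset.sum_congr rfl fun e he => frobSq_sub_of_orthogonal (hprod e he) (hQ e.2),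
    Finset.sum_sub_distrib, Finset.sum_const, nsmul_eq_mul, Finset.mul_sum]
  ring

theorem sufficient_optimality_condition_general
    (n : ℕ)
    (E : Finset (Fin n × Fin n))
    (Rij : Fin n → Fin n → Matrix (Fin 3) (Fin 3) ℝ)
    (hRij : ∀ i j : Fin n, (i, j) ∈ E → SO3 (Rij i j))
    (Rstar : Fin n → Matrix (Fin 3) (Fin 3) ℝ)
    (hRstar : ∀ i, SO3 (Rstar i))
    (Rtil : Matrix (Fin n × Fin 3) (Fin n × Fin 3) ℝ)
    (hRtil : ∀ (i j : Fin n) (a b : Fin 3),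
      Rtil (i, a) (j, b) = if (i, j) ∈ E then Rij i j a b else 0)
    (Lam : Matrix (Fin n × Fin 3) (Fin n × Fin 3) ℝ)
    (hLam : ∀ (i j : Fin n) (a b : Fin 3),
      Lam (i, a) (j, b) =
        if i = j then
          (∑ k ∈ Finset.univ.filter (fun k : Fin n => (i, k) ∈ E),
            Rij i k * (Rstar k)ᵀ * Rstar i) a b
        else 0)
    (hPSD : ∀ x : Fin n × Fin 3 → ℝ, 0 ≤ x ⬝ᵥ ((Lam - Rtil) *ᵥ x)) :
    ∀ R : Fin n → Matrix (Fin 3) (Fin 3) ℝ, (∀ i, SO3 (R i)) →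
      ∑ e ∈ E, frobSq (Rstar e.1 * Rij e.1 e.2 - Rstar e.2) ≤
        ∑ e ∈ E, frobSq (R e.1 * Rij e.1 e.2 - R e.2) := by
  intro R hR
  have hRij_orth : ∀ e ∈ E, (Rij e.1 e.2)ᵀ * Rij e.1 e.2 = 1 := fun e he => (hRij e.1 e.2 he).1
  rw [sum_frobSq_residual E Rij hRij_orth R fun i => (hR i).1,
    sum_frobSq_residual E Rij hRij_orth Rstar fun i => (hRstar i).1]
  have hnonneg := trace_transpose_mul_mul_nonneg _ hPSD (stackTranspose R)
  rw [Matrix.mul_sub, Matrix.sub_mul, trace_sub,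
    trace_stackTranspose_quadForm_of_blockDiagonal R (fun i => (hR i).1) Lam _ hLam,
    trace_stackTranspose_quadForm_of_blockSupport R Rtil E Rij hRtil] at hnonneg
  have hLam_trace : ∑ i, trace (∑ k ∈ Finset.univ.filter (fun k : Fin n => (i, k) ∈ E),
      Rij i k * (Rstar k)ᵀ * Rstar i) = ∑ e ∈ E, trace (Rstar e.1 * Rij e.1 e.2 * (Rstar e.2)ᵀ) := by
    simp only [trace_sum]
    simp only [Finset.sum_filter]
    rw [Finset.sum_sum_ite_mem]
    exact Finset.sum_congr rfl fun e _ => trace_mul_cycle _ _ _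
  linarith

/-- Sufficient optimality condition for rotation averaging: if `Λ - R̃ ⪰ 0`
then `(R*_1, …, R*_n)` is a global minimizer of the chordal rotation averaging
objective. -/
theorem sufficient_optimality_condition
    (n : ℕ) (hn : 1 ≤ n)
    (E : Finset (Fin n × Fin n))
    (hE_irrefl : ∀ i j : Fin n, (i, j) ∈ E → i ≠ j)
    (hE_symm : ∀ i j : Fin n, (i, j) ∈ E → (j, i) ∈ E)
    (Rij : Fin n → Fin n → Matrix (Fin 3) (Fin 3) ℝ)
    (hRij : ∀ i j : Fin n, (i, j) ∈ E → SO3 (Rij i j))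
    (hRij_symm : ∀ i j : Fin n, (i, j) ∈ E → Rij j i = (Rij i j)ᵀ)
    (Rstar : Fin n → Matrix (Fin 3) (Fin 3) ℝ)
    (hRstar : ∀ i, SO3 (Rstar i))
    (Rtil : Matrix (Fin n × Fin 3) (Fin n × Fin 3) ℝ)
    (hRtil : ∀ (i j : Fin n) (a b : Fin 3),
      Rtil (i, a) (j, b) = if (i, j) ∈ E then Rij i j a b else 0)
    (Lam : Matrix (Fin n × Fin 3) (Fin n × Fin 3) ℝ)
    (hLam : ∀ (i j : Fin n) (a b : Fin 3),
      Lam (i, a) (j, b) =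
        if i = j then
          (∑ k ∈ Finset.univ.filter (fun k : Fin n => (i, k) ∈ E),
            Rij i k * (Rstar k)ᵀ * Rstar i) a b
        else 0)
    (hPSD : ∀ x : Fin n × Fin 3 → ℝ, 0 ≤ x ⬝ᵥ ((Lam - Rtil) *ᵥ x)) :
    ∀ R : Fin n → Matrix (Fin 3) (Fin 3) ℝ, (∀ i, SO3 (R i)) →
      ∑ e ∈ E, frobSq (Rstar e.1 * Rij e.1 e.2 - Rstar e.2) ≤
        ∑ e ∈ E, frobSq (R e.1 * Rij e.1 e.2 - R e.2) :=
  sufficient_optimality_condition_general n E Rij hRij Rstar hRstar Rtil hRtil Lam hLam hPSD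
end

section
/- Let A be a real 3×3 matrix with A = U D Vᵀ, where U and V are real 3×3 orthogonal matrices and D is diagonal. Define D̂ = D and V̂ = V if det(U)·det(V) = 1, and D̂ = −D and V̂ = −V if det(U)·det(V) = −1. If Σ̂ ∈ SO(3) minimizes tr(D̂ Σ) over all Σ ∈ SO(3), then X = V̂ Σ̂ Uᵀ belongs to SO(3) and minimizes tr(A X) over all X ∈ SO(3). -/
open Matrix

/-!
With `A = U D̂ V̂ᵀ` and `det U · det V̂ = 1`, the map `Σ ↦ V̂ Σ Uᵀ` is a bijection of `SO(3)` onto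
itself (with inverse `X ↦ V̂ᵀ X U`) which turns `tr(A X)` into `tr(D̂ Σ)`, so it carries minimizers
to minimizers. Replacing `(D, V)` by `(-D, -V)` leaves `U D Vᵀ` unchanged and, in odd dimension,
flips the sign of `det V`; this reduces the case `det U · det V = -1` to the first one.
-/

section Conjugation

variable {n R : Type*} [Fintype n] [DecidableEq n] [CommRing R]

theorem Matrix.trace_mul_mul_transpose_conj {U V : Matrix n n R}
    (hU : Uᵀ * U = 1) (hV : Vᵀ * V = 1) (D M : Matrix n n R) :
    trace (U * D * Vᵀ * (V * M * Uᵀ)) = trace (D * M) :=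
  calc trace (U * D * Vᵀ * (V * M * Uᵀ)) = trace (U * (D * (Vᵀ * V) * M * Uᵀ)) := by
        simp only [Matrix.mul_assoc]
    _ = trace (D * M * (Uᵀ * U)) := by
        rw [trace_mul_comm, hV, Matrix.mul_one]
        simp only [Matrix.mul_assoc]
    _ = trace (D * M) := by rw [hU, Matrix.mul_one]

theorem Matrix.transpose_mul_self_conj_eq_one {U V S : Matrix n n R}
    (hU : U * Uᵀ = 1) (hV : Vᵀ * V = 1) (hS : Sᵀ * S = 1) :
    (V * S * Uᵀ)ᵀ * (V * S * Uᵀ) = 1 :=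
  calc (V * S * Uᵀ)ᵀ * (V * S * Uᵀ) = U * (Sᵀ * (Vᵀ * V) * S) * Uᵀ := by
        simp only [transpose_mul, transpose_transpose, Matrix.mul_assoc]
    _ = 1 := by rw [hV, Matrix.mul_one, hS, Matrix.mul_one, hU]

end Conjugation

theorem SO3.conj {U V S : Matrix (Fin 3) (Fin 3) ℝ} (hU : Uᵀ * U = 1) (hV : Vᵀ * V = 1)
    (hdet : U.det * V.det = 1) (hS : SO3 S) : SO3 (V * S * Uᵀ) := by
  refine ⟨transpose_mul_self_conj_eq_one (mul_eq_one_comm.mp hU) hV hS.1, ?_⟩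
  rw [det_mul, det_mul, det_transpose, hS.2]
  linarith

theorem SO3.inv_conj {U V X : Matrix (Fin 3) (Fin 3) ℝ} (hU : Uᵀ * U = 1)
    (hV : Vᵀ * V = 1) (hdet : U.det * V.det = 1) (hX : SO3 X) : SO3 (Vᵀ * X * U) := by
  have hconj := hX.conj (U := Uᵀ) (V := Vᵀ)
    (by rw [transpose_transpose]; exact mul_eq_one_comm.mp hU)
    (by rw [transpose_transpose]; exact mul_eq_one_comm.mp hV)
    (by rw [det_transpose, det_transpose, hdet])
  rwa [transpose_transpose] at hconj

theorem SO3.conj_isMin {U D V Sig : Matrix (Fin 3) (Fin 3) ℝ} (hU : Uᵀ * U = 1)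
    (hV : Vᵀ * V = 1) (hdet : U.det * V.det = 1) (hSig : SO3 Sig)
    (hmin : ∀ S, SO3 S → trace (D * Sig) ≤ trace (D * S)) :
    SO3 (V * Sig * Uᵀ) ∧
      ∀ X, SO3 X → trace (U * D * Vᵀ * (V * Sig * Uᵀ)) ≤ trace (U * D * Vᵀ * X) := by
  refine ⟨hSig.conj hU hV hdet, fun X hX => ?_⟩
  have hX_eq : V * (Vᵀ * X * U) * Uᵀ = X := by
    simp only [← Matrix.mul_assoc, mul_eq_one_comm.mp hV, Matrix.one_mul]
    rw [Matrix.mul_assoc, mul_eq_one_comm.mp hU, Matrix.mul_one]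
  calc trace (U * D * Vᵀ * (V * Sig * Uᵀ)) = trace (D * Sig) :=
        trace_mul_mul_transpose_conj hU hV D Sig
    _ ≤ trace (D * (Vᵀ * X * U)) := hmin _ (hX.inv_conj hU hV hdet)
    _ = trace (U * D * Vᵀ * X) := by rw [← trace_mul_mul_transpose_conj hU hV, hX_eq]

theorem losso_svd_reduction_general
    (A U D V : Matrix (Fin 3) (Fin 3) ℝ)
    (hU : Uᵀ * U = 1) (hV : Vᵀ * V = 1)
    (hA : A = U * D * Vᵀ)
    (Dhat Vhat : Matrix (Fin 3) (Fin 3) ℝ)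
    (hcase : (U.det * V.det = 1 ∧ Dhat = D ∧ Vhat = V) ∨
             (U.det * V.det = -1 ∧ Dhat = -D ∧ Vhat = -V))
    (Sig : Matrix (Fin 3) (Fin 3) ℝ) (hSig : SO3 Sig)
    (hmin : ∀ S : Matrix (Fin 3) (Fin 3) ℝ, SO3 S →
      Matrix.trace (Dhat * Sig) ≤ Matrix.trace (Dhat * S)) :
    SO3 (Vhat * Sig * Uᵀ) ∧
    ∀ X : Matrix (Fin 3) (Fin 3) ℝ, SO3 X →
      Matrix.trace (A * (Vhat * Sig * Uᵀ)) ≤ Matrix.trace (A * X) := by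
  subst hA
  obtain ⟨hdet, rfl, rfl⟩ | ⟨hdet, rfl, rfl⟩ := hcase
  · exact SO3.conj_isMin hU hV hdet hSig hmin
  · have hA : U * D * Vᵀ = U * (-D) * (-V)ᵀ := by simp
    have hdet_neg : U.det * (-V).det = 1 := by
      rw [det_neg, Fintype.card_fin]
      linarith
    rw [hA]
    exact SO3.conj_isMin hU (by simpa using hV) hdet_neg hSig hmin

/-- Reduction of LOSSO via SVD: if `Σ̂` minimizes `tr(D̂ Σ)` over `SO(3)`, then
`X = V̂ Σ̂ Uᵀ` minimizes `tr(A X)` over `SO(3)`. -/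
theorem losso_svd_reduction
    (A U D V : Matrix (Fin 3) (Fin 3) ℝ)
    (hU : Uᵀ * U = 1) (hV : Vᵀ * V = 1) (hD : D.IsDiag)
    (hA : A = U * D * Vᵀ)
    (Dhat Vhat : Matrix (Fin 3) (Fin 3) ℝ)
    (hcase : (U.det * V.det = 1 ∧ Dhat = D ∧ Vhat = V) ∨
             (U.det * V.det = -1 ∧ Dhat = -D ∧ Vhat = -V))
    (Sig : Matrix (Fin 3) (Fin 3) ℝ) (hSig : SO3 Sig)
    (hmin : ∀ S : Matrix (Fin 3) (Fin 3) ℝ, SO3 S →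
      Matrix.trace (Dhat * Sig) ≤ Matrix.trace (Dhat * S)) :
    SO3 (Vhat * Sig * Uᵀ) ∧
    ∀ X : Matrix (Fin 3) (Fin 3) ℝ, SO3 X →
      Matrix.trace (A * (Vhat * Sig * Uᵀ)) ≤ Matrix.trace (A * X) :=
  losso_svd_reduction_general A U D V hU hV hA Dhat Vhat hcase Sig hSig hmin
end

section
/- Let σ_1, σ_2, σ_3 be nonnegative real numbers and let f(u,θ) = Σ_{i=1}^{3} σ_i (cos θ + (1 − cos θ) u_i²), defined for u = (u_1,u_2,u_3) ∈ ℝ³ with u_1² + u_2² + u_3² = 1 and θ ∈ [−π, π]. Then the minimum value of f over this feasible set equals 2·min(σ_1,σ_2,σ_3) − (σ_1 + σ_2 + σ_3), and it is attained at θ = π and u equал to the standard basis vector e_{i_m}, where i_m is an index attaining min(σ_1,σ_2,σ_3). -/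
open Real BigOperators

/-! Writing `c = cos θ`, the objective is `c · Σ σᵢ + (1 − c) · Σ σᵢ uᵢ²`, an average of
`Σ σᵢ` and `−Σ σᵢ + 2 Σ σᵢ uᵢ²` with weights `(1 + c)/2` and `(1 − c)/2`. On the unit
sphere `Σ σᵢ uᵢ² ≥ min σ`, and `Σ σᵢ ≥ min σ` because every `σᵢ ≥ 0`, so both
terms are at least `2 min σ − Σ σ`; at `θ = π`, `u = e_{i_m}` the bound is attained. -/

section

variable {ι : Type*} [Fintype ι]

theorem le_sum_mul_sq_of_sum_sq_eq_one (σ u : ι → ℝ) (m : ι) (hm : ∀ i, σ m ≤ σ i)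
    (hu : ∑ i, u i ^ 2 = 1) : σ m ≤ ∑ i, σ i * u i ^ 2 :=
  calc σ m = ∑ i, σ m * u i ^ 2 := by rw [← Finset.mul_sum, hu, mul_one]
    _ ≤ ∑ i, σ i * u i ^ 2 :=
      Finset.sum_le_sum fun i _ => mul_le_mul_of_nonneg_right (hm i) (sq_nonneg _)

theorem sum_mul_cos_add_eq (σ u : ι → ℝ) (θ : ℝ) :
    ∑ i, σ i * (cos θ + (1 - cos θ) * u i ^ 2)
      = cos θ * ∑ i, σ i + (1 - cos θ) * ∑ i, σ i * u i ^ 2 := by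
  simp only [mul_add, Finset.sum_add_distrib, Finset.mul_sum]
  congr 1 <;> refine Finset.sum_congr rfl fun i _ => by ring

theorem two_mul_sub_sum_le_sum_mul_cos_add (σ u : ι → ℝ) (hσ : ∀ i, 0 ≤ σ i) (m : ι)
    (hm : ∀ i, σ m ≤ σ i) (hu : ∑ i, u i ^ 2 = 1) (θ : ℝ) :
    2 * σ m - ∑ i, σ i ≤ ∑ i, σ i * (cos θ + (1 - cos θ) * u i ^ 2) := by
  have hsum : σ m ≤ ∑ i, σ i :=
    Finset.single_le_sum (fun i _ => hσ i) (Finset.mem_univ m)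
  have hquad := le_sum_mul_sq_of_sum_sq_eq_one σ u m hm hu
  rw [sum_mul_cos_add_eq]
  nlinarith [neg_one_le_cos θ, cos_le_one θ]

theorem sum_mul_cos_pi_add_single_eq [DecidableEq ι] (σ : ι → ℝ) (m : ι) :
    ∑ i, σ i * (cos π + (1 - cos π) * (if i = m then (1 : ℝ) else 0) ^ 2)
      = 2 * σ m - ∑ i, σ i := by
  have hterm : ∀ i, σ i * (cos π + (1 - cos π) * (if i = m then (1 : ℝ) else 0) ^ 2)
      = 2 * (if i = m then σ i else 0) - σ i := by
    intro i
    split_ifs <;> simp only [cos_pi] <;> ring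
  simp only [hterm, Finset.sum_sub_distrib, ← Finset.mul_sum, Finset.sum_ite_eq',
    Finset.mem_univ, if_true]

end

/-- Minimization of `Σ σ_i (cos θ + (1 − cos θ) u_i²)` for nonnegative `σ_i`:
the minimum over `{u : ‖u‖ = 1} × [−π, π]` equals
`2 min(σ_1,σ_2,σ_3) − (σ_1 + σ_2 + σ_3)`, attained at `θ = π` and `u = e_{i_m}`. -/
theorem axis_angle_min_nonneg
    (σ : Fin 3 → ℝ) (hσ : ∀ i, 0 ≤ σ i)
    (i_m : Fin 3) (him : ∀ i, σ i_m ≤ σ i) :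
    (∀ (u : Fin 3 → ℝ) (θ : ℝ),
      (u 0) ^ 2 + (u 1) ^ 2 + (u 2) ^ 2 = 1 → -π ≤ θ → θ ≤ π →
      2 * σ i_m - (σ 0 + σ 1 + σ 2) ≤
        ∑ i : Fin 3, σ i * (Real.cos θ + (1 - Real.cos θ) * (u i) ^ 2)) ∧
    (∑ i : Fin 3, σ i *
        (Real.cos π + (1 - Real.cos π) * ((if i = i_m then (1 : ℝ) else 0)) ^ 2)
      = 2 * σ i_m - (σ 0 + σ 1 + σ 2)) ∧
    (((if (0 : Fin 3) = i_m then (1 : ℝ) else 0)) ^ 2 +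
      ((if (1 : Fin 3) = i_m then (1 : ℝ) else 0)) ^ 2 +
      ((if (2 : Fin 3) = i_m then (1 : ℝ) else 0)) ^ 2 = 1) := by
  refine ⟨fun u θ hu _ _ => ?_, ?_, ?_⟩
  · simpa only [Fin.sum_univ_three] using
      two_mul_sub_sum_le_sum_mul_cos_add σ u hσ i_m him (by simpa only [Fin.sum_univ_three] using hu) θ
  · simpa only [Fin.sum_univ_three] using sum_mul_cos_pi_add_single_eq σ i_m
  · fin_cases i_m <;> simp [Fin.ext_iff]
end

section
/- Let A be a real 3×3 matrix with A = U D Vᵀ, where U and V are real 3×3 orthogonal matrices, D = diag(σ_1, σ_2, σ_3) with all σ_i ≥ 0, and det(U)·det(V) = 1. Let i_m be an index attaining min(σ_1,σ_2,σ_3), and let Σ̂ be the diagonal matrix whose i_m-th diagonal entry is 1 and whose other two diagonal entries are −1. Then X = V Σ̂ Uᵀ belongs to SO(3), tr(A X) = 2 σ_{i_m} − (σ_1 + σ_2 + σ_3), and tr(A X) ≤ tr(A Y) for every Y ∈ SO(3). -/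
/-!
Substituting `W = Vᵀ Y U`, which ranges over `SO(3)` because `det U · det V = 1`, turns
`tr (A Y)` into `∑ σᵢ Wᵢᵢ`. Orthogonality gives `Wᵢᵢ ≥ -1`, and for `W ∈ SO(3)` also
`tr W ≥ -1`: from `adj W = Wᵀ` one gets `(tr W)² - 2 tr W = tr W² ≤ tr (Wᵀ W) = 3`.
Hence `∑ σᵢ Wᵢᵢ ≥ 2σₘ - ∑ σᵢ` for a minimal `σₘ`, with equality at `W = Σ̂`.
-/

open Matrix

variable {n : Type*} [Fintype n]

theorem Matrix.trace_mul_self_le_trace_transpose_mul_self (W : Matrix n n ℝ) :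
    trace (W * W) ≤ trace (Wᵀ * W) := by
  have h := (posSemidef_conjTranspose_mul_self (W - Wᵀ)).trace_nonneg
  simp only [conjTranspose_eq_transpose_of_trivial, transpose_sub, transpose_transpose,
    sub_mul, mul_sub, trace_sub] at h
  rw [trace_mul_comm W Wᵀ, ← transpose_mul, trace_transpose] at h
  linarith

variable [DecidableEq n]

theorem Matrix.mem_unitaryGroup_iff_transpose_mul_self {W : Matrix n n ℝ} :
    W ∈ unitaryGroup n ℝ ↔ Wᵀ * W = 1 := by
  rw [mem_unitaryGroup_iff', star_eq_conjTranspose, conjTranspose_eq_transpose_of_trivial]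

theorem Matrix.neg_one_le_diag_of_transpose_mul_self {W : Matrix n n ℝ} (hW : Wᵀ * W = 1)
    (i : n) : -1 ≤ W i i :=
  (abs_le.mp (entry_norm_bound_of_unitary (mem_unitaryGroup_iff_transpose_mul_self.mpr hW) i i)).1

theorem Matrix.two_mul_trace_adjugate_fin_three {R : Type*} [CommRing R]
    (W : Matrix (Fin 3) (Fin 3) R) :
    2 * trace W.adjugate = trace W ^ 2 - trace (W * W) := by
  simp only [adjugate_fin_three, trace_fin_three, of_apply, cons_val', cons_val_zero,
    cons_val_fin_one, cons_val_one, cons_val, mul_apply, Fin.sum_univ_three]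
  ring

theorem Matrix.adjugate_eq_transpose {R : Type*} [CommRing R] {W : Matrix n n R}
    (hW : Wᵀ * W = 1) (hdet : W.det = 1) : W.adjugate = Wᵀ :=
  calc W.adjugate = Wᵀ * W * W.adjugate := by rw [hW, one_mul]
    _ = Wᵀ := by rw [mul_assoc, mul_adjugate, hdet, one_smul, mul_one]

theorem SO3.neg_one_le_trace {W : Matrix (Fin 3) (Fin 3) ℝ} (hW : SO3 W) : -1 ≤ trace W := by
  have hsq := trace_mul_self_le_trace_transpose_mul_self W
  have hadj := two_mul_trace_adjugate_fin_three W
  rw [adjugate_eq_transpose hW.1 hW.2, trace_transpose] at hadj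
  rw [hW.1, trace_one, Fintype.card_fin] at hsq
  push_cast at hsq
  nlinarith

theorem SO3.mul_mul_transpose {W P Q : Matrix (Fin 3) (Fin 3) ℝ} (hW : SO3 W)
    (hP : Pᵀ * P = 1) (hQ : Qᵀ * Q = 1) (hdet : P.det * Q.det = 1) : SO3 (P * W * Qᵀ) := by
  constructor
  · calc (P * W * Qᵀ)ᵀ * (P * W * Qᵀ) = Q * (Wᵀ * (Pᵀ * P) * W) * Qᵀ := by
          simp only [transpose_mul, transpose_transpose, Matrix.mul_assoc]
      _ = 1 := by rw [hP, Matrix.mul_one, hW.1, Matrix.mul_one, mul_eq_one_comm.mp hQ]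
  · rw [det_mul, det_mul, det_transpose, hW.2, mul_one, hdet]

theorem SO3_diagonal_ite (m : Fin 3) : SO3 (diagonal fun i => if i = m then 1 else -1) := by
  constructor
  · rw [diagonal_transpose, diagonal_mul_diagonal, ← diagonal_one]
    congr 1
    ext i
    split_ifs <;> norm_num
  · rw [det_diagonal, Fin.prod_univ_three]
    fin_cases m <;> simp

theorem trace_diagonal_mul_diagonal_ite (σ : Fin 3 → ℝ) (m : Fin 3) :
    trace (diagonal σ * diagonal fun i => if i = m then 1 else -1) =
      2 * σ m - (σ 0 + σ 1 + σ 2) := by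
  rw [diagonal_mul_diagonal, trace_diagonal, Fin.sum_univ_three]
  fin_cases m <;>
    simp only [Fin.zero_eta, Fin.mk_one, Fin.reduceFinMk, Fin.reduceEq, ↓reduceIte, mul_one,
      mul_neg] <;> ring

theorem SO3.le_trace_diagonal_mul {W : Matrix (Fin 3) (Fin 3) ℝ} (hW : SO3 W) {σ : Fin 3 → ℝ}
    {m : Fin 3} (hσm : 0 ≤ σ m) (hm : ∀ i, σ m ≤ σ i) :
    2 * σ m - (σ 0 + σ 1 + σ 2) ≤ trace (diagonal σ * W) := by
  have hdiag := neg_one_le_diag_of_transpose_mul_self hW.1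
  have htr := hW.neg_one_le_trace
  simp only [trace_fin_three, diagonal_mul] at htr ⊢
  -- `∑ σᵢ Wᵢᵢ - (2σₘ - ∑ σᵢ) = ∑ (σᵢ - σₘ)(Wᵢᵢ + 1) + σₘ (tr W + 1)`
  linarith [mul_nonneg (sub_nonneg.mpr (hm 0)) (neg_le_iff_add_nonneg.mp (hdiag 0)),
    mul_nonneg (sub_nonneg.mpr (hm 1)) (neg_le_iff_add_nonneg.mp (hdiag 1)),
    mul_nonneg (sub_nonneg.mpr (hm 2)) (neg_le_iff_add_nonneg.mp (hdiag 2)),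
    mul_nonneg hσm (neg_le_iff_add_nonneg.mp htr)]

/-- Closed-form LOSSO solution in the case `det(U)·det(V) = 1`:
`X = V Σ̂ Uᵀ` with `Σ̂ = diag(±1)` having `+1` at a minimal singular value index
is optimal, with optimal value `2σ_{i_m} − (σ_1 + σ_2 + σ_3)`. -/
theorem losso_closed_form_det_pos
    (A U V : Matrix (Fin 3) (Fin 3) ℝ) (σ : Fin 3 → ℝ)
    (hσ : ∀ i, 0 ≤ σ i)
    (hU : Uᵀ * U = 1) (hV : Vᵀ * V = 1)
    (hdet : U.det * V.det = 1)
    (hA : A = U * Matrix.diagonal σ * Vᵀ)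
    (i_m : Fin 3) (him : ∀ i, σ i_m ≤ σ i)
    (Sighat : Matrix (Fin 3) (Fin 3) ℝ)
    (hSighat : Sighat = Matrix.diagonal (fun i => if i = i_m then (1 : ℝ) else -1)) :
    SO3 (V * Sighat * Uᵀ) ∧
    Matrix.trace (A * (V * Sighat * Uᵀ)) = 2 * σ i_m - (σ 0 + σ 1 + σ 2) ∧
    ∀ Y : Matrix (Fin 3) (Fin 3) ℝ, SO3 Y →
      Matrix.trace (A * (V * Sighat * Uᵀ)) ≤ Matrix.trace (A * Y) := by
  have hcycle (Y : Matrix (Fin 3) (Fin 3) ℝ) :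
      trace (A * Y) = trace (diagonal σ * (Vᵀ * Y * U)) := by
    rw [hA, Matrix.mul_assoc, Matrix.mul_assoc, trace_mul_comm]
    simp only [Matrix.mul_assoc]
  have hvalue : trace (A * (V * Sighat * Uᵀ)) = 2 * σ i_m - (σ 0 + σ 1 + σ 2) := by
    have hconj : Vᵀ * (V * Sighat * Uᵀ) * U = Sighat := by
      simp only [Matrix.mul_assoc, hU, Matrix.mul_one]
      rw [← Matrix.mul_assoc, hV, Matrix.one_mul]
    rw [hcycle, hconj, hSighat, trace_diagonal_mul_diagonal_ite]
  refine ⟨hSighat ▸ (SO3_diagonal_ite i_m).mul_mul_transpose hV hU (by rwa [mul_comm]), hvalue,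
    fun Y hY => ?_⟩
  rw [hvalue, hcycle]
  refine SO3.le_trace_diagonal_mul ?_ (hσ i_m) him
  simpa using hY.mul_mul_transpose (P := Vᵀ) (Q := Uᵀ) (by simpa using mul_eq_one_comm.mp hV)
    (by simpa using mul_eq_one_comm.mp hU) (by simpa [mul_comm] using hdet)
end

section
/- Let A be a real 3×3 matrix with A = U D Vᵀ, where U and V are real 3×3 orthogonal matrices, D = diag(σ_1, σ_2, σ_3) with all σ_i ≥ 0, and det(U)·det(V) = −1. Then X = −V Uᵀ belongs to SO(3), tr(A X) = −(σ_1 + σ_2 + σ_3), and tr(A X) ≤ tr(A Y) for every Y ∈ SO(3). -/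
/-!
With `Z = Vᵀ Y U`, cyclicity of the trace gives `tr (A Y) = ∑ σᵢ Zᵢᵢ`. For orthogonal `Y` the
matrix `Z` is orthogonal, so `Zᵢᵢ ≥ -1` and `tr (A Y) ≥ -∑ σᵢ` because `σᵢ ≥ 0`. The bound is
attained at `Z = -1`, i.e. `Y = -V Uᵀ`, whose determinant is `(-1)³ det V det U = 1`.
-/

open Matrix

namespace Matrix

variable {n R : Type*} [Fintype n] [DecidableEq n]

theorem trace_diagonal_mul [CommRing R] (σ : n → R) (M : Matrix n n R) :
    trace (diagonal σ * M) = ∑ i, σ i * M i i := by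
  simp [trace, diagonal_mul]

theorem trace_mul_diagonal_mul_transpose_mul [CommRing R] (U V Y : Matrix n n R) (σ : n → R) :
    trace (U * diagonal σ * Vᵀ * Y) = ∑ i, σ i * (Vᵀ * Y * U) i i := by
  rw [Matrix.mul_assoc, Matrix.mul_assoc, trace_mul_comm, ← trace_diagonal_mul]
  simp only [Matrix.mul_assoc]

theorem mem_unitaryGroup_real_iff {Z : Matrix n n ℝ} :
    Z ∈ unitaryGroup n ℝ ↔ Zᵀ * Z = 1 := by
  rw [mem_unitaryGroup_iff', star_eq_conjTranspose, conjTranspose_eq_transpose_of_trivial]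

theorem transpose_mul_mul_mem_unitaryGroup {U V Y : Matrix n n ℝ} (hU : U ∈ unitaryGroup n ℝ)
    (hV : V ∈ unitaryGroup n ℝ) (hY : Y ∈ unitaryGroup n ℝ) : Vᵀ * Y * U ∈ unitaryGroup n ℝ := by
  have hVt : Vᵀ ∈ unitaryGroup n ℝ := by
    simpa only [star_eq_conjTranspose, conjTranspose_eq_transpose_of_trivial]
      using Unitary.star_mem hV
  exact mul_mem (mul_mem hVt hY) hU

theorem neg_one_le_apply_self_of_mem_unitaryGroup {Z : Matrix n n ℝ}
    (hZ : Z ∈ unitaryGroup n ℝ) (i : n) : -1 ≤ Z i i :=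
  (abs_le.mp (entry_norm_bound_of_unitary hZ i i)).1

theorem neg_sum_le_sum_mul_apply_self {Z : Matrix n n ℝ} (hZ : Z ∈ unitaryGroup n ℝ)
    {σ : n → ℝ} (hσ : ∀ i, 0 ≤ σ i) : -∑ i, σ i ≤ ∑ i, σ i * Z i i := by
  rw [← Finset.sum_neg_distrib]
  gcongr with i
  nlinarith [neg_one_le_apply_self_of_mem_unitaryGroup hZ i, hσ i]

end Matrix

/-- Closed-form LOSSO solution in the case `det(U)·det(V) = −1`:
`X = −V Uᵀ` is optimal, with optimal value `−(σ_1 + σ_2 + σ_3)`. -/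
theorem losso_closed_form_det_neg
    (A U V : Matrix (Fin 3) (Fin 3) ℝ) (σ : Fin 3 → ℝ)
    (hσ : ∀ i, 0 ≤ σ i)
    (hU : Uᵀ * U = 1) (hV : Vᵀ * V = 1)
    (hdet : U.det * V.det = -1)
    (hA : A = U * Matrix.diagonal σ * Vᵀ) :
    SO3 (-(V * Uᵀ)) ∧
    Matrix.trace (A * (-(V * Uᵀ))) = -(σ 0 + σ 1 + σ 2) ∧
    ∀ Y : Matrix (Fin 3) (Fin 3) ℝ, SO3 Y →
      Matrix.trace (A * (-(V * Uᵀ))) ≤ Matrix.trace (A * Y) := by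
  have hX_orth : (-(V * Uᵀ))ᵀ * -(V * Uᵀ) = 1 := by
    rw [transpose_neg, transpose_mul, transpose_transpose, neg_mul_neg,
      show U * Vᵀ * (V * Uᵀ) = U * (Vᵀ * V) * Uᵀ by noncomm_ring, hV, Matrix.mul_one,
      mul_eq_one_comm.mp hU]
  have hX_det : (-(V * Uᵀ)).det = 1 := by
    rw [det_neg, det_mul, det_transpose, Fintype.card_fin, mul_comm V.det, hdet]
    norm_num
  have hX_value : Matrix.trace (A * (-(V * Uᵀ))) = -(σ 0 + σ 1 + σ 2) := by
    rw [hA, trace_mul_diagonal_mul_transpose_mul,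
      show Vᵀ * -(V * Uᵀ) * U = -((Vᵀ * V) * (Uᵀ * U)) by noncomm_ring, hV, hU]
    simp [Fin.sum_univ_three]
  refine ⟨⟨hX_orth, hX_det⟩, hX_value, fun Y hY => ?_⟩
  have hZ := transpose_mul_mul_mem_unitaryGroup (mem_unitaryGroup_real_iff.mpr hU)
    (mem_unitaryGroup_real_iff.mpr hV) (mem_unitaryGroup_real_iff.mpr hY.1)
  rw [hX_value, hA, trace_mul_diagonal_mul_transpose_mul]
  simpa only [Fin.sum_univ_three] using neg_sum_le_sum_mul_apply_self hZ hσ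
end
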